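/- arXiv:2106.13729 — 2 statements merged into one kernel-verified Lean document; each statement's English description precedes it below -/
import Mathlib

section
/- Let a < b be real numbers and let f : ℝ × ℝ → ℂ be continuous on [a,b] × [a,b]. Then the Neumann series ∑_{n=1}^∞ f^{∗n}(x, y) of iterated Volterra powers converges absolutely and uniformly on the set {(x, y) ∈ [a,b] × [a,b] : y ≤ x}. -/
/-!
If `‖f‖ ≤ M` on the square, induction on `n` gives the Picard-type estimate
`‖f^{∗(n+1)}(x, y)‖ ≤ M^(n+1) (x - y)^n / n!` for `y ≤ x`, since integrating
`(ζ - y)^n / n!` from `y` to `x` yields `(x - y)^(n+1) / (n+1)!`. With `x - y ≤ b - a`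
these bounds are the terms of the convergent series `M e^{M (b - a)}`, and the Weierstrass
M-test gives absolute and uniform convergence.
-/

noncomputable def volterraComp (f l : ℝ × ℝ → ℂ) : ℝ × ℝ → ℂ :=
  fun p => ∫ ζ in p.2..p.1, f (p.1, ζ) * l (ζ, p.2)

/-- `volterraPow f n` is the iterated Volterra power `f^{∗(n+1)}`,
so that `volterraPow f 0 = f^{∗1} = f`. -/
noncomputable def volterraPow (f : ℝ × ℝ → ℂ) : ℕ → ℝ × ℝ → ℂ
  | 0 => f
  | n + 1 => volterraComp f (volterraPow f n)

open intervalIntegral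

theorem integral_sub_pow_div_factorial (x y : ℝ) (n : ℕ) :
    ∫ ζ in y..x, (ζ - y) ^ n / n.factorial = (x - y) ^ (n + 1) / (n + 1).factorial := by
  rw [integral_div, integral_comp_sub_right (· ^ n), integral_pow, sub_self,
    zero_pow n.succ_ne_zero, sub_zero, Nat.factorial_succ]
  push_cast
  field_simp

-- No integrability of `f` is needed: `norm_integral_le_of_norm_le` only asks for an integrable
-- majorant, since a non-integrable integrand has integral `0`.
theorem norm_volterraPow_le {I : Set ℝ} [I.OrdConnected] {f : ℝ × ℝ → ℂ} {M : ℝ}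
    (hM : ∀ p ∈ I ×ˢ I, ‖f p‖ ≤ M) (n : ℕ) {x y : ℝ} (hx : x ∈ I) (hy : y ∈ I)
    (hyx : y ≤ x) :
    ‖volterraPow f n (x, y)‖ ≤ M ^ (n + 1) * ((x - y) ^ n / n.factorial) := by
  induction n generalizing x with
  | zero => simpa [volterraPow] using hM (x, y) ⟨hx, hy⟩
  | succ n ih =>
    have hM0 : 0 ≤ M := (norm_nonneg _).trans (hM (x, y) ⟨hx, hy⟩)
    have hpointwise : ∀ ζ ∈ Set.Ioc y x, ‖f (x, ζ) * volterraPow f n (ζ, y)‖ ≤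
        M ^ (n + 2) * ((ζ - y) ^ n / n.factorial) := by
      intro ζ hζ
      have hζI : ζ ∈ I := Set.OrdConnected.out' hy hx ⟨hζ.1.le, hζ.2⟩
      rw [norm_mul, pow_succ' M (n + 1), mul_assoc]
      exact mul_le_mul (hM _ ⟨hx, hζI⟩) (ih hζI hζ.1.le) (norm_nonneg _) hM0
    calc ‖∫ ζ in y..x, f (x, ζ) * volterraPow f n (ζ, y)‖
        ≤ ∫ ζ in y..x, M ^ (n + 2) * ((ζ - y) ^ n / n.factorial) :=
          norm_integral_le_of_norm_le hyx (MeasureTheory.ae_of_all _ hpointwise)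
            (Continuous.intervalIntegrable (by fun_prop) _ _)
      _ = M ^ (n + 2) * ((x - y) ^ (n + 1) / (n + 1).factorial) := by
          rw [integral_const_mul, integral_sub_pow_div_factorial]

theorem summable_pow_succ_mul_pow_div_factorial (M r : ℝ) :
    Summable fun n : ℕ => M ^ (n + 1) * (r ^ n / n.factorial) := by
  refine ((Real.summable_pow_div_factorial (M * r)).mul_left M).congr fun n => ?_
  ring

theorem volterraNeumann_converges_general (a b : ℝ) (f : ℝ × ℝ → ℂ)
    (hf : ContinuousOn f (Set.Icc a b ×ˢ Set.Icc a b)) :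
    (∀ p ∈ {p : ℝ × ℝ | p ∈ Set.Icc a b ×ˢ Set.Icc a b ∧ p.2 ≤ p.1},
      Summable fun n : ℕ => ‖volterraPow f n p‖) ∧
    TendstoUniformlyOn (fun N : ℕ => fun p : ℝ × ℝ => ∑ n ∈ Finset.range N, volterraPow f n p)
      (fun p : ℝ × ℝ => ∑' n : ℕ, volterraPow f n p) Filter.atTop
      {p : ℝ × ℝ | p ∈ Set.Icc a b ×ˢ Set.Icc a b ∧ p.2 ≤ p.1} := by
  obtain ⟨M, hM⟩ := (isCompact_Icc.prod isCompact_Icc).exists_bound_of_continuousOn hf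
  have hbound : ∀ n, ∀ p ∈ {p : ℝ × ℝ | p ∈ Set.Icc a b ×ˢ Set.Icc a b ∧ p.2 ≤ p.1},
      ‖volterraPow f n p‖ ≤ M ^ (n + 1) * ((b - a) ^ n / n.factorial) := by
    rintro n ⟨x, y⟩ ⟨⟨hx, hy⟩, hyx⟩
    have hM0 : 0 ≤ M := (norm_nonneg _).trans (hM (x, y) ⟨hx, hy⟩)
    refine (norm_volterraPow_le hM n hx hy hyx).trans ?_
    gcongr
    exacts [hx.2, hy.1]
  have hsum := summable_pow_succ_mul_pow_div_factorial M (b - a)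
  exact ⟨fun p hp => .of_nonneg_of_le (fun _ => norm_nonneg _) (hbound · p hp) hsum,
    tendstoUniformlyOn_tsum_nat hsum hbound⟩

/-- The Neumann series `∑_{n≥1} f^{∗n}` of iterated Volterra powers of a continuous
kernel converges absolutely and uniformly on `{(x,y) ∈ [a,b]² : y ≤ x}`. -/
theorem volterraNeumann_converges (a b : ℝ) (hab : a < b) (f : ℝ × ℝ → ℂ)
    (hf : ContinuousOn f (Set.Icc a b ×ˢ Set.Icc a b)) :
    (∀ p ∈ {p : ℝ × ℝ | p ∈ Set.Icc a b ×ˢ Set.Icc a b ∧ p.2 ≤ p.1},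
      Summable fun n : ℕ => ‖volterraPow f n p‖) ∧
    TendstoUniformlyOn (fun N : ℕ => fun p : ℝ × ℝ => ∑ n ∈ Finset.range N, volterraPow f n p)
      (fun p : ℝ × ℝ => ∑' n : ℕ, volterraPow f n p) Filter.atTop
      {p : ℝ × ℝ | p ∈ Set.Icc a b ×ˢ Set.Icc a b ∧ p.2 ≤ p.1} :=
  volterraNeumann_converges_general a b f hf
end

section
/- Let a < b be real numbers and let f : ℝ × ℝ → ℂ be continuous on [a,b] × [a,b]. Define G(x, y) := ∑_{n=1}^∞ f^{∗n}(x, y), the sum of the iterated Volterra powers. Then G is continuous on the set {(x, y) ∈ [a,b] × [a,b] : y ≤ x}. -/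
/-!
The kernel only enters `volterraPow f n` through its values on the triangle
`T = {(x, y) ∈ [a,b]² : y ≤ x}`, so we may replace `f` by a continuous extension `F` to the
whole plane (Tietze), whose Volterra powers are continuous everywhere. On `T` the powers obey
the factorial bound `‖f^{∗(n+1)}(x, y)‖ ≤ M^{n+1} (x - y)^n / n!`, where `M` bounds `‖f‖`
on `T`, so the series converges uniformly on `T` by the Weierstrass M-test.
-/

open Set MeasureTheory

universe u v

theorem ContinuousOn.exists_continuous_eqOn {X : Type u} {Y : Type v} [TopologicalSpace X]
    [NormalSpace X] [TopologicalSpace Y] [TietzeExtension.{u, v} Y] {s : Set X} {f : X → Y}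
    (hs : IsClosed s) (hf : ContinuousOn f s) : ∃ F : X → Y, Continuous F ∧ EqOn F f s := by
  obtain ⟨F, hF⟩ := ContinuousMap.exists_restrict_eq hs ⟨s.domRestrict f, hf.domRestrict⟩
  exact ⟨F, F.continuous, fun p hp => DFunLike.congr_fun hF ⟨p, hp⟩⟩

theorem continuous_volterraComp {f l : ℝ × ℝ → ℂ} (hf : Continuous f) (hl : Continuous l) :
    Continuous (volterraComp f l) := by
  set g : ℝ × ℝ → ℝ → ℂ := fun p ζ => f (p.1, ζ) * l (ζ, p.2)
  have hg : Continuous g.uncurry := by fun_prop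
  have hprim : ∀ s : ℝ × ℝ → ℝ, Continuous s → Continuous fun p => ∫ ζ in 0..s p, g p ζ :=
    fun s hs => intervalIntegral.continuous_parametric_intervalIntegral_of_continuous hg hs
  have hsplit : volterraComp f l = fun p => (∫ ζ in 0..p.1, g p ζ) - ∫ ζ in 0..p.2, g p ζ := by
    funext p
    have hgp : Continuous (g p) := by fun_prop
    exact (intervalIntegral.integral_interval_sub_left (hgp.intervalIntegrable _ _)
      (hgp.intervalIntegrable _ _)).symm
  rw [hsplit]
  exact (hprim _ continuous_fst).sub (hprim _ continuous_snd)

theorem continuous_volterraPow {f : ℝ × ℝ → ℂ} (hf : Continuous f) (n : ℕ) :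
    Continuous (volterraPow f n) := by
  induction n with
  | zero => exact hf
  | succ n ih => exact continuous_volterraComp hf ih

theorem integral_sub_pow (y x : ℝ) (n : ℕ) :
    ∫ ζ in y..x, (ζ - y) ^ n = (x - y) ^ (n + 1) / (n + 1) := by
  rw [intervalIntegral.integral_comp_sub_right (fun u => u ^ n), integral_pow, sub_self,
    zero_pow n.succ_ne_zero, sub_zero]

def volterraTriangle (a b : ℝ) : Set (ℝ × ℝ) :=
  {p | p ∈ Icc a b ×ˢ Icc a b ∧ p.2 ≤ p.1}

section Triangle

variable {a b x y ζ : ℝ}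

theorem mk_mem_volterraTriangle_left (hp : (x, y) ∈ volterraTriangle a b)
    (hζ : ζ ∈ Icc y x) : (x, ζ) ∈ volterraTriangle a b :=
  ⟨⟨hp.1.1, hp.1.2.1.trans hζ.1, hζ.2.trans hp.1.1.2⟩, hζ.2⟩

theorem mk_mem_volterraTriangle_right (hp : (x, y) ∈ volterraTriangle a b)
    (hζ : ζ ∈ Icc y x) : (ζ, y) ∈ volterraTriangle a b :=
  ⟨⟨⟨hp.1.2.1.trans hζ.1, hζ.2.trans hp.1.1.2⟩, hp.1.2⟩, hζ.1⟩

theorem volterraPow_eqOn {f g : ℝ × ℝ → ℂ} (hfg : EqOn f g (volterraTriangle a b)) (n : ℕ) :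
    EqOn (volterraPow f n) (volterraPow g n) (volterraTriangle a b) := by
  induction n with
  | zero => exact hfg
  | succ n ih =>
    rintro ⟨x, y⟩ hp
    refine intervalIntegral.integral_congr fun ζ hζ => ?_
    rw [uIcc_of_le hp.2] at hζ
    dsimp only
    rw [hfg (mk_mem_volterraTriangle_left hp hζ), ih (mk_mem_volterraTriangle_right hp hζ)]

theorem norm_volterraPow_le_s14 {f : ℝ × ℝ → ℂ} {M : ℝ} (hM : 0 ≤ M)
    (hfM : ∀ p ∈ volterraTriangle a b, ‖f p‖ ≤ M) (n : ℕ) {p : ℝ × ℝ}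
    (hp : p ∈ volterraTriangle a b) :
    ‖volterraPow f n p‖ ≤ M ^ (n + 1) * (p.1 - p.2) ^ n / n.factorial := by
  induction n generalizing p with
  | zero => simpa [volterraPow] using hfM p hp
  | succ n ih =>
    obtain ⟨x, y⟩ := p
    have hyx : y ≤ x := hp.2
    set C : ℝ := M ^ (n + 2) / n.factorial with hC
    have hpoint : ∀ ζ ∈ uIoc y x, ‖f (x, ζ) * volterraPow f n (ζ, y)‖ ≤ C * (ζ - y) ^ n := by
      intro ζ hζ
      rw [uIoc_of_le hyx] at hζ
      have hζ' : ζ ∈ Icc y x := Ioc_subset_Icc_self hζ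
      calc ‖f (x, ζ) * volterraPow f n (ζ, y)‖
          = ‖f (x, ζ)‖ * ‖volterraPow f n (ζ, y)‖ := norm_mul _ _
        _ ≤ M * (M ^ (n + 1) * (ζ - y) ^ n / n.factorial) :=
          mul_le_mul (hfM _ (mk_mem_volterraTriangle_left hp hζ'))
            (ih (mk_mem_volterraTriangle_right hp hζ')) (norm_nonneg _) hM
        _ = C * (ζ - y) ^ n := by ring
    calc ‖volterraPow f (n + 1) (x, y)‖
        ≤ |∫ ζ in y..x, C * (ζ - y) ^ n| :=
          intervalIntegral.norm_integral_le_abs_of_norm_le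
            ((ae_restrict_iff' measurableSet_uIoc).mpr (ae_of_all _ hpoint))
            ((by fun_prop : Continuous fun ζ : ℝ => C * (ζ - y) ^ n).intervalIntegrable y x)
      _ = C * ((x - y) ^ (n + 1) / (n + 1)) := by
        rw [intervalIntegral.integral_const_mul, integral_sub_pow,
          abs_of_nonneg (by have := sub_nonneg.mpr hyx; positivity)]
      _ = M ^ (n + 1 + 1) * (x - y) ^ (n + 1) / (n + 1).factorial := by
        rw [hC, Nat.factorial_succ]
        push_cast
        field_simp

theorem norm_volterraPow_le_of_mem {f : ℝ × ℝ → ℂ} {M : ℝ} (hM : 0 ≤ M)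
    (hfM : ∀ p ∈ volterraTriangle a b, ‖f p‖ ≤ M) (n : ℕ) {p : ℝ × ℝ}
    (hp : p ∈ volterraTriangle a b) :
    ‖volterraPow f n p‖ ≤ M * ((M * (b - a)) ^ n / n.factorial) := by
  have hdiag : 0 ≤ p.1 - p.2 := sub_nonneg.mpr hp.2
  have hdiam : p.1 - p.2 ≤ b - a := by linarith [hp.1.1.2, hp.1.2.1]
  calc ‖volterraPow f n p‖ ≤ M ^ (n + 1) * (p.1 - p.2) ^ n / n.factorial :=
        norm_volterraPow_le_s14 hM hfM n hp
    _ ≤ M ^ (n + 1) * (b - a) ^ n / n.factorial := by gcongr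
    _ = M * ((M * (b - a)) ^ n / n.factorial) := by rw [mul_pow]; ring

end Triangle

theorem volterraNeumann_continuousOn_general (a b : ℝ) (f : ℝ × ℝ → ℂ)
    (hf : ContinuousOn f (Set.Icc a b ×ˢ Set.Icc a b))
    (G : ℝ × ℝ → ℂ) (hG : G = fun p => ∑' n : ℕ, volterraPow f n p) :
    ContinuousOn G {p : ℝ × ℝ | p ∈ Set.Icc a b ×ˢ Set.Icc a b ∧ p.2 ≤ p.1} := by
  have hT : volterraTriangle a b ⊆ Icc a b ×ˢ Icc a b := fun _ hp => hp.1
  obtain ⟨F, hFc, hFf⟩ := hf.exists_continuous_eqOn (isClosed_Icc.prod isClosed_Icc)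
  have hpow : ∀ n, ContinuousOn (volterraPow f n) (volterraTriangle a b) := fun n =>
    (continuous_volterraPow hFc n).continuousOn.congr (volterraPow_eqOn (hFf.mono hT) n).symm
  obtain ⟨M₀, hM₀⟩ := (isCompact_Icc.prod isCompact_Icc).exists_bound_of_continuousOn hf
  have hfM : ∀ p ∈ volterraTriangle a b, ‖f p‖ ≤ max M₀ 0 := fun p hp =>
    (hM₀ p (hT hp)).trans (le_max_left _ _)
  rw [hG]
  exact continuousOn_tsum hpow ((Real.summable_pow_div_factorial _).mul_left _)
    fun n p hp => norm_volterraPow_le_of_mem (le_max_right _ _) hfM n hp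

/-- The sum of the iterated Volterra powers of a continuous kernel is continuous
on the triangle `{(x,y) ∈ [a,b]² : y ≤ x}`. -/
theorem volterraNeumann_continuousOn (a b : ℝ) (hab : a < b) (f : ℝ × ℝ → ℂ)
    (hf : ContinuousOn f (Set.Icc a b ×ˢ Set.Icc a b))
    (G : ℝ × ℝ → ℂ) (hG : G = fun p => ∑' n : ℕ, volterraPow f n p) :
    ContinuousOn G {p : ℝ × ℝ | p ∈ Set.Icc a b ×ˢ Set.Icc a b ∧ p.2 ≤ p.1} :=
  volterraNeumann_continuousOn_general a b f hf G hG
end
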